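/- Let E, F ⊆ ℝⁿ be Lebesgue measurable sets of finite positive measure. Suppose there exist k₁, k₂ ∈ ℤ and n₁, n₂ ∈ ℤⁿ such that, modulo Lebesgue-null sets, 2^{k₁}F ⊆ E + 2πn₁ and E + 2πn₂ ⊆ 2^{k₂}F, and such that (E + 2πn₂) ∩ 2^{k₁}F is a null set. Then there exists a Lebesgue measurable set G ⊆ (E + 2πn₂) ∪ 2^{k₁}F such that G is 2πℤⁿ-translation congruent to E and 2-dilation congruent to F. -/

import Mathlib

open MeasureTheory Set
open scoped Real symmDiff

noncomputable section

/-- An a.e. (modulo Lebesgue-null sets) partition of the set `A` by the family `P`. -/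
def IsAEPartitionN {d : ℕ} {ι : Type*} (P : ι → Set (Fin d → ℝ)) (A : Set (Fin d → ℝ)) :
    Prop :=
  volume (A ∆ (⋃ i, P i)) = 0 ∧ ∀ i j : ι, i ≠ j → volume (P i ∩ P j) = 0

/-- The translate `A + 2πm` of `A ⊆ ℝⁿ` by the lattice vector `2πm`, `m ∈ ℤⁿ`. -/
def transN {d : ℕ} (m : Fin d → ℤ) (A : Set (Fin d → ℝ)) : Set (Fin d → ℝ) :=
  (fun x => x + fun i => 2 * Real.pi * (m i : ℝ)) '' A

/-- The dilate `2^k A` of `A ⊆ ℝⁿ`, `k ∈ ℤ`. -/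
def dilN {d : ℕ} (k : ℤ) (A : Set (Fin d → ℝ)) : Set (Fin d → ℝ) :=
  (fun x => ((2 : ℝ) ^ k) • x) '' A

/-- `A` is `2πℤⁿ`-translation congruent to `B`. -/
def TransCongruentN {d : ℕ} (A B : Set (Fin d → ℝ)) : Prop :=
  ∃ P : (Fin d → ℤ) → Set (Fin d → ℝ), (∀ m, MeasurableSet (P m)) ∧
    IsAEPartitionN P A ∧ IsAEPartitionN (fun m => transN m (P m)) B

/-- `A` is `2`-dilation congruent to `B`. -/
def DilCongruentN {d : ℕ} (A B : Set (Fin d → ℝ)) : Prop :=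
  ∃ P : ℤ → Set (Fin d → ℝ), (∀ k, MeasurableSet (P k)) ∧
    IsAEPartitionN P A ∧ IsAEPartitionN (fun k => dilN k (P k)) B

/-!
Put `s = E + 2πn₂` and `t = 2^{k₁}F`. Dilation by `2^{k₁-k₂}` maps `2^{k₂}F`, which contains `s`
up to a null set, into `t`, and translation by `2π(n₂ - n₁)` maps `E + 2πn₁`, which contains `t`
up to a null set, into `s`. After discarding a null set invariant under both maps these are
injections `s → t → s`, and the Schröder–Bernstein construction splits
`s = A ⊔ (U + 2π(n₂ - n₁))` and `t = 2^{k₁-k₂}A ⊔ U` with `A ⊆ s`, `U ⊆ t`. Then `G = A ∪ U`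
works: `A - 2πn₂` and `U - 2πn₁` tile `E`, while `2^{-k₂}A` and `2^{-k₁}U` tile `F`; the two
pieces of `G` meet in a null set because `s ∩ t` is null.
-/

section SchroederBernstein

variable {α : Type*} [MeasurableSpace α] {f g : α → α}

theorem MeasurableEmbedding.iterate (hf : MeasurableEmbedding f) (n : ℕ) :
    MeasurableEmbedding f^[n] := by
  induction n with
  | zero => exact MeasurableEmbedding.id
  | succ n ih => rw [Function.iterate_succ']; exact hf.comp ih

theorem exists_measurableSet_union_image_diff_image_eq (hf : MeasurableEmbedding f)
    (hg : MeasurableEmbedding g) {X Y : Set α} (hX : MeasurableSet X) (hY : MeasurableSet Y)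
    (hfXY : MapsTo f X Y) (hgYX : MapsTo g Y X) :
    ∃ A ⊆ X, MeasurableSet A ∧ A ∪ g '' (Y \ f '' A) = X ∧ Disjoint A (g '' (Y \ f '' A)) := by
  -- the Schröder–Bernstein construction, which only takes countably many measurable steps
  set Δ := X \ g '' Y
  set A := ⋃ n, (g ∘ f)^[n] '' Δ
  have hAX : A ⊆ X := iUnion_subset fun n =>
    ((hgYX.comp hfXY).iterate n).image_subset.trans' (image_mono sdiff_subset)
  have hΔA : Δ ⊆ A := subset_iUnion_of_subset 0 (by rw [Function.iterate_zero, image_id])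
  have hgfA : MapsTo (g ∘ f) A A := by
    intro x hx
    obtain ⟨n, y, hy, rfl⟩ := mem_iUnion.1 hx
    exact mem_iUnion.2 ⟨n + 1, y, hy, by rw [Function.iterate_succ_apply']⟩
  refine ⟨A, hAX, MeasurableSet.iUnion fun n =>
    ((hg.comp hf).iterate n).measurableSet_image' (hX.diff (hg.measurableSet_image' hY)), ?_, ?_⟩
  · refine subset_antisymm (union_subset hAX ?_) fun x hx => ?_
    · exact image_subset_iff.2 fun y hy => hgYX hy.1
    by_cases hxg : x ∈ g '' Y
    · obtain ⟨y, hy, rfl⟩ := hxg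
      by_cases hyf : y ∈ f '' A
      · obtain ⟨a, ha, rfl⟩ := hyf
        exact Or.inl (hgfA ha)
      · exact Or.inr ⟨y, ⟨hy, hyf⟩, rfl⟩
    · exact Or.inl (hΔA ⟨hx, hxg⟩)
  · refine disjoint_left.2 fun x hxA ⟨y, ⟨hy, hyf⟩, hyx⟩ => ?_
    obtain ⟨n, z, hz, rfl⟩ := mem_iUnion.1 hxA
    cases n with
    | zero => exact hz.2 ⟨y, hy, hyx⟩
    | succ n =>
      rw [Function.iterate_succ_apply'] at hyx
      exact hyf ⟨_, mem_iUnion.2 ⟨n, z, hz, rfl⟩, (hg.injective hyx).symm⟩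

end SchroederBernstein

section NullSaturation

variable {α ι : Type*} [MeasurableSpace α] {μ : Measure α}

def preimageSaturation (f : ι → α → α) (B : Set α) : ℕ → Set α
  | 0 => B
  | n + 1 => preimageSaturation f B n ∪ ⋃ i, f i ⁻¹' preimageSaturation f B n

theorem exists_measurable_null_superset_preimage_subset [Countable ι] {f : ι → α → α}
    (hf : ∀ i, Measure.QuasiMeasurePreserving (f i) μ μ) {B : Set α} (hB : μ B = 0) :
    ∃ N, B ⊆ N ∧ MeasurableSet N ∧ μ N = 0 ∧ ∀ i, f i ⁻¹' N ⊆ N := by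
  set S := preimageSaturation f (toMeasurable μ B)
  have hS : ∀ n, MeasurableSet (S n) ∧ μ (S n) = 0 := by
    intro n
    induction n with
    | zero => exact ⟨measurableSet_toMeasurable μ B, (measure_toMeasurable B).trans hB⟩
    | succ n ih =>
      exact ⟨ih.1.union (.iUnion fun i => (hf i).measurable ih.1),
        measure_union_null ih.2 (measure_iUnion_null fun i => (hf i).preimage_null ih.2)⟩
  refine ⟨⋃ n, S n, (subset_toMeasurable μ B).trans (subset_iUnion S 0),
    .iUnion fun n => (hS n).1, measure_iUnion_null fun n => (hS n).2, fun i => ?_⟩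
  rw [preimage_iUnion]
  exact iUnion_mono' fun n =>
    ⟨n + 1, subset_union_right.trans' (subset_iUnion (fun i => f i ⁻¹' S n) i)⟩

theorem exists_measurable_null_mapsTo_diff {f g : α → α}
    (hf : Measure.QuasiMeasurePreserving f μ μ) (hg : Measure.QuasiMeasurePreserving g μ μ)
    {s s' t t' : Set α} (hs : μ (s \ s') = 0) (ht : μ (t \ t') = 0) (hfst : MapsTo f s' t)
    (hgts : MapsTo g t' s) :
    ∃ N, MeasurableSet N ∧ μ N = 0 ∧ MapsTo f (s \ N) (t \ N) ∧ MapsTo g (t \ N) (s \ N) := by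
  obtain ⟨N, hBN, hN, hN0, hfgN⟩ := exists_measurable_null_superset_preimage_subset
    (f := fun b => cond b f g) (Bool.forall_bool.2 ⟨hg, hf⟩) (measure_union_null hs ht)
  refine ⟨N, hN, hN0, fun x hx => ⟨hfst ?_, fun h => hx.2 (hfgN true h)⟩,
    fun x hx => ⟨hgts ?_, fun h => hx.2 (hfgN false h)⟩⟩
  · by_contra h; exact hx.2 (hBN (Or.inl ⟨hx.1, h⟩))
  · by_contra h; exact hx.2 (hBN (Or.inr ⟨hx.1, h⟩))

end NullSaturation

section AESchroederBernstein

variable {α : Type*} [MeasurableSpace α] {μ : Measure α} {f g : α → α}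

theorem exists_ae_schroederBernstein (hf : MeasurableEmbedding f) (hg : MeasurableEmbedding g)
    (hfμ : Measure.QuasiMeasurePreserving f μ μ) (hgμ : Measure.QuasiMeasurePreserving g μ μ)
    {s s' t t' : Set α} (hs : MeasurableSet s) (ht : MeasurableSet t) (hss' : μ (s \ s') = 0)
    (htt' : μ (t \ t') = 0) (hfst : MapsTo f s' t) (hgts : MapsTo g t' s) :
    ∃ A U, MeasurableSet A ∧ MeasurableSet U ∧ A ⊆ s ∧ U ⊆ t ∧
      Disjoint A (g '' U) ∧ μ (s ∆ (A ∪ g '' U)) = 0 ∧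
      Disjoint (f '' A) U ∧ μ (t ∆ (f '' A ∪ U)) = 0 := by
  obtain ⟨N, hN, hN0, hfN, hgN⟩ := exists_measurable_null_mapsTo_diff hfμ hgμ hss' htt' hfst hgts
  obtain ⟨A, hAX, hA, hAU, hdisj⟩ :=
    exists_measurableSet_union_image_diff_image_eq hf hg (hs.diff hN) (ht.diff hN) hfN hgN
  have hfAY : f '' A ⊆ t \ N := hfN.image_subset.trans' (image_mono hAX)
  have hnull : ∀ r, μ (r ∆ (r \ N)) = 0 := fun r =>
    measure_mono_null (by simp [symmDiff_def]) hN0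
  refine ⟨A, (t \ N) \ f '' A, hA, (ht.diff hN).diff (hf.measurableSet_image' hA),
    hAX.trans sdiff_subset, sdiff_subset.trans sdiff_subset, hdisj, ?_, disjoint_sdiff_right, ?_⟩
  · rw [hAU]; exact hnull s
  · rw [union_sdiff_cancel hfAY]; exact hnull t

end AESchroederBernstein

section PairFamily

variable {α ι : Type*} [DecidableEq ι]

def pairFamily (a b : ι) (U V : Set α) (i : ι) : Set α :=
  (if i = a then U else ∅) ∪ (if i = b then V else ∅)

theorem iUnion_pairFamily (a b : ι) (U V : Set α) : ⋃ i, pairFamily a b U V i = U ∪ V := by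
  refine subset_antisymm (iUnion_subset fun i => union_subset_union ?_ ?_) ?_
  · split_ifs <;> simp
  · split_ifs <;> simp
  · rintro x (hx | hx)
    · exact mem_iUnion.2 ⟨a, Or.inl (by simp [hx])⟩
    · exact mem_iUnion.2 ⟨b, Or.inr (by simp [hx])⟩

theorem image_pairFamily (φ : ι → α → α) (a b : ι) (U V : Set α) :
    (fun i => φ i '' pairFamily a b U V i) = pairFamily a b (φ a '' U) (φ b '' V) := by
  funext i
  unfold pairFamily
  rw [image_union]
  congr 1 <;> split_ifs with h <;> simp [h]

end PairFamily

section PairPartition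

variable {d : ℕ} {ι : Type*}

theorem isAEPartitionN_pairFamily [DecidableEq ι] (a b : ι) {U V W : Set (Fin d → ℝ)}
    (hUV : volume (U ∩ V) = 0) (hW : volume (W ∆ (U ∪ V)) = 0) :
    IsAEPartitionN (pairFamily a b U V) W := by
  refine ⟨by rwa [iUnion_pairFamily], fun i j hij => ?_⟩
  unfold pairFamily
  by_cases hia : i = a <;> by_cases hib : i = b <;> by_cases hja : j = a <;>
    by_cases hjb : j = b <;> simp_all [inter_comm V U]

variable [AddGroup ι] {φ : ι → (Fin d → ℝ) → Fin d → ℝ}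

theorem mapsTo_image_sub (hφ_add : ∀ i j x, φ (i + j) x = φ i (φ j x)) (i j : ι)
    (s : Set (Fin d → ℝ)) : MapsTo (φ (i - j)) (φ j '' s) (φ i '' s) := by
  rintro _ ⟨x, hx, rfl⟩
  exact ⟨x, hx, by rw [← hφ_add, sub_add_cancel]⟩

/-- For `φ = latticeTranslate` (resp. `dyadicDilate`) the conclusion is
`TransCongruentN (A ∪ U) B` (resp. `DilCongruentN (A ∪ U) B`). -/
theorem exists_isAEPartitionN_union (hφ_zero : ∀ x, φ 0 x = x)
    (hφ_add : ∀ i j x, φ (i + j) x = φ i (φ j x))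
    (hφ : ∀ i, Measure.QuasiMeasurePreserving (φ i) volume volume)
    {A U B : Set (Fin d → ℝ)} (hA : MeasurableSet A) (hU : MeasurableSet U)
    (hAU : volume (A ∩ U) = 0) {j k : ι} (hdisj : Disjoint A (φ j '' U))
    (hB : volume ((φ k '' B) ∆ (A ∪ φ j '' U)) = 0) :
    ∃ P : ι → Set (Fin d → ℝ), (∀ i, MeasurableSet (P i)) ∧
      IsAEPartitionN P (A ∪ U) ∧ IsAEPartitionN (fun i => φ i '' P i) B := by
  classical
  have hleft : ∀ i x, φ (-i) (φ i x) = x := fun i x => by rw [← hφ_add, neg_add_cancel, hφ_zero]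
  have hright : ∀ i x, φ i (φ (-i) x) = x := fun i x => by rw [← hφ_add, add_neg_cancel, hφ_zero]
  have hinj : ∀ i, Function.Injective (φ i) := fun i =>
    Function.LeftInverse.injective (hleft i)
  have himage_add : ∀ i i' (s : Set (Fin d → ℝ)), φ (i + i') '' s = φ i '' (φ i' '' s) := by
    intro i i' s
    rw [← image_comp]
    exact image_congr fun x _ => hφ_add i i' x
  refine ⟨pairFamily (-k) (-k + j) A U, fun i => ?_,
    isAEPartitionN_pairFamily _ _ hAU (by simp), ?_⟩
  · unfold pairFamily
    split_ifs <;> simp [hA, hU]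
  rw [image_pairFamily]
  refine isAEPartitionN_pairFamily _ _ ?_ ?_
  · rw [himage_add, ← image_inter (hinj _), hdisj.inter_eq, image_empty, measure_empty]
  · have hBk : B = φ (-k) '' (φ k '' B) := by
      rw [← himage_add, neg_add_cancel]
      exact (image_congr fun x _ => hφ_zero x).trans (image_id B) |>.symm
    rw [hBk, himage_add, ← image_union, ← image_symmDiff (hinj _),
      image_eq_preimage_of_inverse (hright k) (hleft k)]
    exact (hφ _).preimage_null hB

end PairPartition

section LatticeTranslationsAndDyadicDilations

variable {d : ℕ}

-- `transN m s = latticeTranslate m '' s` and `dilN k s = dyadicDilate k '' s` hold by `rfl`.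
def latticeTranslate (m : Fin d → ℤ) (x : Fin d → ℝ) : Fin d → ℝ :=
  x + fun i => 2 * π * (m i : ℝ)

def dyadicDilate (k : ℤ) (x : Fin d → ℝ) : Fin d → ℝ := (2 : ℝ) ^ k • x

theorem latticeTranslate_zero (x : Fin d → ℝ) : latticeTranslate 0 x = x := by
  ext i
  simp [latticeTranslate]

theorem latticeTranslate_add (m n : Fin d → ℤ) (x : Fin d → ℝ) :
    latticeTranslate (m + n) x = latticeTranslate m (latticeTranslate n x) := by
  ext i
  simp only [latticeTranslate, Pi.add_apply, Int.cast_add]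
  ring

theorem measurableEmbedding_latticeTranslate (m : Fin d → ℤ) :
    MeasurableEmbedding (latticeTranslate m) :=
  measurableEmbedding_addRight _

theorem quasiMeasurePreserving_latticeTranslate (m : Fin d → ℤ) :
    Measure.QuasiMeasurePreserving (latticeTranslate m) volume volume :=
  (measurePreserving_add_right volume _).quasiMeasurePreserving

theorem dyadicDilate_zero (x : Fin d → ℝ) : dyadicDilate 0 x = x := by
  simp [dyadicDilate]

theorem dyadicDilate_add (j k : ℤ) (x : Fin d → ℝ) :
    dyadicDilate (j + k) x = dyadicDilate j (dyadicDilate k x) := by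
  rw [dyadicDilate, dyadicDilate, dyadicDilate, zpow_add₀ (two_ne_zero' ℝ), mul_smul]

theorem measurableEmbedding_dyadicDilate (k : ℤ) :
    MeasurableEmbedding (dyadicDilate (d := d) k) :=
  measurableEmbedding_const_smul₀ (zpow_ne_zero k two_ne_zero)

theorem quasiMeasurePreserving_dyadicDilate (k : ℤ) :
    Measure.QuasiMeasurePreserving (dyadicDilate (d := d) k) volume volume :=
  Measure.quasiMeasurePreserving_smul volume (zpow_ne_zero k two_ne_zero)

end LatticeTranslationsAndDyadicDilations

theorem stmt_9_general (d : ℕ) (E F : Set (Fin d → ℝ))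
    (hEmeas : MeasurableSet E) (hFmeas : MeasurableSet F)
    (k₁ k₂ : ℤ) (n₁ n₂ : Fin d → ℤ)
    (h₁ : volume (dilN k₁ F \ transN n₁ E) = 0)
    (h₂ : volume (transN n₂ E \ dilN k₂ F) = 0)
    (h₃ : volume (transN n₂ E ∩ dilN k₁ F) = 0) :
    ∃ G : Set (Fin d → ℝ), MeasurableSet G ∧ G ⊆ transN n₂ E ∪ dilN k₁ F ∧
      TransCongruentN G E ∧ DilCongruentN G F := by
  obtain ⟨A, U, hA, hU, hAE, hUF, hdisjA, hEAU, hdisjU, hFAU⟩ :=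
    exists_ae_schroederBernstein (s := latticeTranslate n₂ '' E) (t := dyadicDilate k₁ '' F)
      (measurableEmbedding_dyadicDilate (k₁ - k₂)) (measurableEmbedding_latticeTranslate (n₂ - n₁))
      (quasiMeasurePreserving_dyadicDilate _) (quasiMeasurePreserving_latticeTranslate _)
      ((measurableEmbedding_latticeTranslate n₂).measurableSet_image' hEmeas)
      ((measurableEmbedding_dyadicDilate k₁).measurableSet_image' hFmeas) h₂ h₁
      (mapsTo_image_sub dyadicDilate_add k₁ k₂ F)
      (mapsTo_image_sub latticeTranslate_add n₂ n₁ E)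
  have hAU : volume (A ∩ U) = 0 := measure_mono_null (inter_subset_inter hAE hUF) h₃
  refine ⟨A ∪ U, hA.union hU, union_subset_union hAE hUF, ?_, ?_⟩
  · exact exists_isAEPartitionN_union latticeTranslate_zero latticeTranslate_add
      quasiMeasurePreserving_latticeTranslate hA hU hAU hdisjA hEAU
  · rw [union_comm]
    exact exists_isAEPartitionN_union dyadicDilate_zero dyadicDilate_add
      quasiMeasurePreserving_dyadicDilate hU hA (by rwa [inter_comm]) hdisjU.symm
      (by rwa [union_comm])

/-- Lemma 5 of the paper.  Let `E, F ⊆ ℝⁿ` be measurable with finite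
positive measure.  If there are `k₁, k₂ ∈ ℤ` and `n₁, n₂ ∈ ℤⁿ` with
`2^{k₁}F ⊆ E + 2πn₁` and `E + 2πn₂ ⊆ 2^{k₂}F` modulo null sets, and
`(E + 2πn₂) ∩ 2^{k₁}F` null, then there is a measurable
`G ⊆ (E + 2πn₂) ∪ 2^{k₁}F` that is `2πℤⁿ`-translation congruent to `E` and
`2`-dilation congruent to `F`. -/
theorem stmt_9 (d : ℕ) (E F : Set (Fin d → ℝ))
    (hEmeas : MeasurableSet E) (hFmeas : MeasurableSet F)
    (hEpos : 0 < volume E) (hEfin : volume E < ⊤)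
    (hFpos : 0 < volume F) (hFfin : volume F < ⊤)
    (k₁ k₂ : ℤ) (n₁ n₂ : Fin d → ℤ)
    (h₁ : volume (dilN k₁ F \ transN n₁ E) = 0)
    (h₂ : volume (transN n₂ E \ dilN k₂ F) = 0)
    (h₃ : volume (transN n₂ E ∩ dilN k₁ F) = 0) :
    ∃ G : Set (Fin d → ℝ), MeasurableSet G ∧ G ⊆ transN n₂ E ∪ dilN k₁ F ∧
      TransCongruentN G E ∧ DilCongruentN G F :=
  stmt_9_general d E F hEmeas hFmeas k₁ k₂ n₁ n₂ h₁ h₂ h₃
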